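/- arXiv:2101.05562 — 2 statements merged into one kernel-verified Lean document; each statement's English description precedes it below -/
import Mathlib

section
/- Let a, b, c : ℕ → ℂ (indexed from 1, with the convention a_0 = c_0 = 1). Fix z with 0 < |z| < 1 and let u = (u_k)_{k≥0} be a sequence of complex numbers such that for every k ≥ 0 the series ∑_{m=k+1}^∞ T(k,m;z) u_m converges absolutely and u_k = z^k + ∑_{m=k+1}^∞ T(k,m;z) u_m. Then u satisfies the three-term recurrence u_{k−1} + b_k u_k + a_k c_k u_{k+1} = (z + 1/z) u_k for all k ≥ 1. -/
/-!
As a function of its first argument, `G(·, m; z)` is a Green function of the second difference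
`v ↦ v_k - (z + 1/z) v_{k+1} + v_{k+2}`: applied to it, it gives `δ_{m, k+1}`, and the same
operator annihilates `z^k`. Applying it to the Volterra equation termwise (the series converge
absolutely), the series collapse to the terms `m = k+1` and `m = k+2`, which are exactly the
recurrence.
-/

noncomputable section

/-- The Green kernel `G(k,m;z) = (z^{m-k} - z^{k-m})/(z - z⁻¹)` for `m ≥ k`,
and `G(k,m;z) = 0` for `m < k` (both expressions vanish at `m = k`). -/
def greenG (z : ℂ) (k m : ℤ) : ℂ :=
  if k ≤ m then (z ^ (m - k) - z ^ (k - m)) / (z - z⁻¹) else 0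

/-- The kernel `T(k,m;z) = -b_m G(k,m;z) + (1 - a_{m-1} c_{m-1}) G(k,m-1;z)`,
for sequences `a, b, c` indexed from 1 (with the convention `a 0 = c 0 = 1`). -/
def kerT (a b c : ℕ → ℂ) (z : ℂ) (k m : ℕ) : ℂ :=
  -(b m) * greenG z k m + (1 - a (m - 1) * c (m - 1)) * greenG z k ((m : ℤ) - 1)

lemma sub_inv_ne_zero_of_norm_lt_one {𝕜 : Type*} [NormedDivisionRing 𝕜] {z : 𝕜}
    (hz0 : z ≠ 0) (hz1 : ‖z‖ < 1) : z - z⁻¹ ≠ 0 := by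
  refine sub_ne_zero.2 fun h => ?_
  have : 1 < ‖z⁻¹‖ := by rw [norm_inv]; exact one_lt_inv₀ (norm_pos_iff.2 hz0) |>.2 hz1
  rw [← h] at this
  exact (hz1.trans this).false

lemma zpow_sub_one_add_zpow_add_one {K : Type*} [Field K] {z : K} (hz : z ≠ 0) (t : ℤ) :
    z ^ (t - 1) + z ^ (t + 1) = (z + 1 / z) * z ^ t := by
  rw [zpow_sub_one₀ hz, zpow_add_one₀ hz]
  ring

namespace greenG

variable {z : ℂ}

lemma eq_zero_of_le {k m : ℤ} (h : m ≤ k) : greenG z k m = 0 := by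
  unfold greenG
  split_ifs with hkm
  · obtain rfl : k = m := le_antisymm hkm h
    simp
  · rfl

lemma self_add_one (hz : z - z⁻¹ ≠ 0) (k : ℤ) : greenG z k (k + 1) = 1 := by
  rw [greenG, if_pos (by omega), add_sub_cancel_left, show k - (k + 1) = -1 by ring,
    zpow_one, zpow_neg_one, div_self hz]

lemma second_difference (hz0 : z ≠ 0) (hz : z - z⁻¹ ≠ 0) (k m : ℤ) :
    greenG z k m - (z + 1 / z) * greenG z (k + 1) m + greenG z (k + 2) m
      = if m = k + 1 then 1 else 0 := by
  rcases lt_trichotomy m (k + 1) with hm | rfl | hm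
  · rw [if_neg hm.ne, eq_zero_of_le (by omega), eq_zero_of_le (by omega),
      eq_zero_of_le (by omega)]
    ring
  · rw [if_pos rfl, self_add_one hz, eq_zero_of_le le_rfl, eq_zero_of_le (by omega)]
    ring
  · rw [if_neg hm.ne']
    simp only [greenG, if_pos (show k ≤ m by omega), if_pos (show k + 1 ≤ m by omega),
      if_pos (show k + 2 ≤ m by omega)]
    have hup := zpow_sub_one_add_zpow_add_one hz0 (m - (k + 1))
    have hdown := zpow_sub_one_add_zpow_add_one hz0 (k + 1 - m)
    rw [show m - (k + 1) - 1 = m - (k + 2) by ring, show m - (k + 1) + 1 = m - k by ring] at hup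
    rw [show k + 1 - m - 1 = k - m by ring, show k + 1 - m + 1 = k + 2 - m by ring] at hdown
    rw [← mul_div_assoc, ← sub_div, ← add_div, div_eq_zero_iff]
    left
    linear_combination hup - hdown

end greenG

namespace kerT

variable {a b c : ℕ → ℂ} {z : ℂ}

lemma eq_zero_of_le {k m : ℕ} (h : m ≤ k) : kerT a b c z k m = 0 := by
  rw [kerT, greenG.eq_zero_of_le (by omega), greenG.eq_zero_of_le (by omega)]
  ring

lemma second_difference (hz0 : z ≠ 0) (hz : z - z⁻¹ ≠ 0) (k m : ℕ) :
    kerT a b c z k m - (z + 1 / z) * kerT a b c z (k + 1) m + kerT a b c z (k + 2) m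
      = -(b m) * (if m = k + 1 then 1 else 0)
        + (1 - a (m - 1) * c (m - 1)) * (if m = k + 2 then 1 else 0) := by
  have hG := greenG.second_difference hz0 hz k m
  have hG' := greenG.second_difference hz0 hz k ((m : ℤ) - 1)
  simp only [show (m : ℤ) = k + 1 ↔ m = k + 1 by omega,
    show (m : ℤ) - 1 = k + 1 ↔ m = k + 2 by omega] at hG hG'
  simp only [kerT]
  push_cast
  linear_combination (-(b m)) * hG + (1 - a (m - 1) * c (m - 1)) * hG'

end kerT

lemma tsum_add_succ_eq_of_eq_zero {α : Type*} [AddCommMonoid α] [TopologicalSpace α]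
    {f : ℕ → α} {k : ℕ} (hf : ∀ m ≤ k, f m = 0) :
    ∑' m, f (m + k + 1) = ∑' m, f m :=
  (add_left_injective (k + 1)).tsum_eq fun m hm =>
    ⟨m - (k + 1), Nat.sub_add_cancel (not_le.1 fun h => hm (hf m (by omega)))⟩

lemma tsum_mul_indicator_pair {R : Type*} [Semiring R] [TopologicalSpace R] (f g u : ℕ → R)
    (n : ℕ) :
    ∑' m, (f m * (if m = n + 1 then 1 else 0) + g m * (if m = n + 2 then 1 else 0)) * u m
      = f (n + 1) * u (n + 1) + g (n + 2) * u (n + 2) := by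
  rw [tsum_eq_sum (s := {n + 1, n + 2}) fun m hm => by
      simp only [Finset.mem_insert, Finset.mem_singleton, not_or] at hm
      simp [hm.1, hm.2],
    Finset.sum_pair (by omega)]
  simp

lemma second_difference_of_volterra {K : ℕ → ℕ → ℂ} {u : ℕ → ℂ} {z : ℂ} (hz0 : z ≠ 0)
    (hsum : ∀ k, Summable fun m => K k m * u m)
    (hvolt : ∀ k, u k = z ^ k + ∑' m, K k m * u m) (n : ℕ) :
    u n - (z + 1 / z) * u (n + 1) + u (n + 2)
      = ∑' m, (K n m - (z + 1 / z) * K (n + 1) m + K (n + 2) m) * u m := by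
  have hpow : z ^ n + z ^ (n + 2) = (z + 1 / z) * z ^ (n + 1) := by
    field_simp
    ring
  have hlin : ∑' m, (K n m - (z + 1 / z) * K (n + 1) m + K (n + 2) m) * u m
      = ∑' m, K n m * u m - (z + 1 / z) * ∑' m, K (n + 1) m * u m
        + ∑' m, K (n + 2) m * u m := by
    rw [← tsum_mul_left, ← (hsum n).tsum_sub ((hsum (n + 1)).mul_left _),
      ← ((hsum n).sub ((hsum (n + 1)).mul_left _)).tsum_add (hsum (n + 2))]
    congr 1 with m
    ring
  rw [hlin]
  linear_combination hvolt n - (z + 1 / z) * hvolt (n + 1) + hvolt (n + 2) + hpow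

theorem stmt6_general (a b c : ℕ → ℂ)
    (z : ℂ) (hz0 : z ≠ 0) (hz1 : ‖z‖ < 1)
    (u : ℕ → ℂ)
    (hsum : ∀ k : ℕ, Summable (fun m : ℕ => ‖kerT a b c z k (m + k + 1) * u (m + k + 1)‖))
    (hvolt : ∀ k : ℕ,
      u k = z ^ k + ∑' m : ℕ, kerT a b c z k (m + k + 1) * u (m + k + 1)) :
    ∀ k : ℕ, 1 ≤ k →
      u (k - 1) + b k * u k + a k * c k * u (k + 1) = (z + 1 / z) * u k := by
  intro k hk
  obtain ⟨n, rfl⟩ : ∃ n, k = n + 1 := ⟨k - 1, by omega⟩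
  have hz := sub_inv_ne_zero_of_norm_lt_one hz0 hz1
  have hvanish (k : ℕ) : ∀ m ≤ k, kerT a b c z k m * u m = 0 := fun m hm => by
    rw [kerT.eq_zero_of_le hm, zero_mul]
  have key := second_difference_of_volterra hz0
    (fun k => (summable_nat_add_iff (k + 1)).1 (hsum k).of_norm)
    (fun k => (hvolt k).trans (by rw [tsum_add_succ_eq_of_eq_zero (hvanish k)])) n
  simp only [kerT.second_difference hz0 hz, tsum_mul_indicator_pair,
    show n + 2 - 1 = n + 1 from rfl] at key
  rw [Nat.add_sub_cancel]
  linear_combination key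

/-- Converse direction of Theorem 1.1: every solution of the discrete Volterra-type
equation `u_k = z^k + ∑_{m=k+1}^∞ T(k,m;z) u_m` (the series converging absolutely)
solves the three-term recurrence
`u_{k-1} + b_k u_k + a_k c_k u_{k+1} = (z + 1/z) u_k`, `k ≥ 1`. -/
theorem stmt6 (a b c : ℕ → ℂ) (ha0 : a 0 = 1) (hc0 : c 0 = 1)
    (z : ℂ) (hz0 : z ≠ 0) (hz1 : ‖z‖ < 1)
    (u : ℕ → ℂ)
    (hsum : ∀ k : ℕ, Summable (fun m : ℕ => ‖kerT a b c z k (m + k + 1) * u (m + k + 1)‖))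
    (hvolt : ∀ k : ℕ,
      u k = z ^ k + ∑' m : ℕ, kerT a b c z k (m + k + 1) * u (m + k + 1)) :
    ∀ k : ℕ, 1 ≤ k →
      u (k - 1) + b k * u k + a k * c k * u (k + 1) = (z + 1 / z) * u k :=
  stmt6_general a b c z hz0 hz1 u hsum hvolt
end
end

section
/- Let n ∈ ℕ and h > 0. Every eigenvalue λ of the discrete Schrödinger operator J_{n,h} with pure imaginary step potential satisfies |Re λ| < 2 and 0 < Im λ < h. -/
/-!
Multiplying the eigenvalue equation by `conj g_k` and summing gives
`2 Re S + i h ∑_{k ≤ n} ‖g_k‖² = λ ∑_k ‖g_k‖²` with `S = ∑_k conj g_k g_{k+1}`.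
Since `g_0 = 0 ≠ g_1`, `|Re S| ≤ ∑_k ‖g_k‖ ‖g_{k+1}‖ < ∑_k ‖g_k‖²`, so the real part gives
`|Re λ| < 2`, and the imaginary part gives `0 ≤ Im λ ≤ h`. If `Im λ = h`, then `g` vanishes
beyond `n`; if `Im λ = 0`, then `g_n = 0`, `λ` is real, and a conserved quantity of the free
equation on the tail forces `g_{n+1} = 0`. Either way `g` has two consecutive zeros, hence
vanishes identically.
-/

noncomputable section

/-- `l` is an eigenvalue of the semi-infinite discrete Schrödinger matrix `J_{n,h}`
with pure imaginary step potential (diagonal entries `i h` on sites `1,…,n`, `0` afterwards;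
off-diagonal entries `1`): there is a nonzero square-summable sequence `g = (g_k)_{k ≥ 1}`,
extended by `g 0 = 0`, with `g_{k-1} + b_k g_k + g_{k+1} = l g_k` for all `k ≥ 1`. -/
def IsSchrodingerEigenvalue (n : ℕ) (h : ℝ) (l : ℂ) : Prop :=
  ∃ g : ℕ → ℂ, g 0 = 0 ∧ g ≠ 0 ∧ Summable (fun k : ℕ => ‖g k‖ ^ 2) ∧
    ∀ k : ℕ, 1 ≤ k →
      g (k - 1) + (if k ≤ n then (h : ℂ) * Complex.I else 0) * g k + g (k + 1) = l * g k

open Filter Topology ComplexConjugate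
open Complex (I)

section SquareSummable

variable {g : ℕ → ℂ}

lemma tendsto_zero_of_summable_norm_sq (hg : Summable fun k => ‖g k‖ ^ 2) :
    Tendsto g atTop (𝓝 0) := by
  rw [tendsto_zero_iff_norm_tendsto_zero]
  simpa using hg.tendsto_atTop_zero.sqrt

lemma summable_norm_mul_norm_succ (hg : Summable fun k => ‖g k‖ ^ 2) :
    Summable fun k => ‖g k‖ * ‖g (k + 1)‖ :=
  (hg.add ((summable_nat_add_iff 1).mpr hg)).of_nonneg_of_le (fun _ => by positivity)
    fun k => by nlinarith [sq_nonneg (‖g k‖ - ‖g (k + 1)‖)]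

lemma summable_conj_mul_succ (hg : Summable fun k => ‖g k‖ ^ 2) :
    Summable fun k => conj (g k) * g (k + 1) :=
  (summable_norm_mul_norm_succ hg).of_norm_bounded fun k => by simp

lemma hasSum_norm_sq_succ (hg0 : g 0 = 0) (hg : Summable fun k => ‖g k‖ ^ 2) :
    HasSum (fun k => ‖g (k + 1)‖ ^ 2) (∑' k, ‖g k‖ ^ 2) := by
  simpa [hg0] using (hasSum_nat_add_iff' 1).mpr hg.hasSum

lemma tsum_norm_mul_norm_succ_lt (hg0 : g 0 = 0) (hg1 : g 1 ≠ 0)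
    (hg : Summable fun k => ‖g k‖ ^ 2) :
    ∑' k, ‖g k‖ * ‖g (k + 1)‖ < ∑' k, ‖g k‖ ^ 2 := by
  have hP := (summable_norm_mul_norm_succ hg).hasSum
  have hdiff : HasSum (fun k => (‖g k‖ - ‖g (k + 1)‖) ^ 2)
      (∑' k, ‖g k‖ ^ 2 + ∑' k, ‖g k‖ ^ 2 - 2 * ∑' k, ‖g k‖ * ‖g (k + 1)‖) :=
    ((hg.hasSum.add (hasSum_norm_sq_succ hg0 hg)).sub (hP.mul_left 2)).congr_fun fun k => by ring
  have hpos : 0 < ∑' k, (‖g k‖ - ‖g (k + 1)‖) ^ 2 :=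
    hdiff.summable.tsum_pos (fun _ => sq_nonneg _) 0 (by simp [hg0, hg1])
  linarith [hdiff.tsum_eq]

lemma eq_zero_of_hasSum_mul_norm_sq_nonpos {w : ℕ → ℝ} {a : ℝ} (hw : ∀ k, 0 ≤ w k)
    (hs : HasSum (fun k => w k * ‖g k‖ ^ 2) a) (ha : a ≤ 0) {k : ℕ} (hk : 0 < w k) :
    g k = 0 := by
  have hle := le_hasSum hs k fun j _ => by have := hw j; positivity
  by_contra hgk
  have : 0 < w k * ‖g k‖ ^ 2 := by have := norm_pos_iff.mpr hgk; positivity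
  linarith

end SquareSummable

def IsSchrodingerSolution (b : ℕ → ℂ) (l : ℂ) (g : ℕ → ℂ) : Prop :=
  ∀ k, g k + b (k + 1) * g (k + 1) + g (k + 2) = l * g (k + 1)

section Recurrence

variable {l : ℂ} {g : ℕ → ℂ}

theorem IsSchrodingerSolution.eq_zero_of_consecutive_zeros {b : ℕ → ℂ}
    (hrec : IsSchrodingerSolution b l g) {m : ℕ} (hm : g m = 0) (hm₁ : g (m + 1) = 0) :
    g = 0 := by
  have step : ∀ k, (g k = 0 ∧ g (k + 1) = 0) ↔ (g (k + 1) = 0 ∧ g (k + 2) = 0) := by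
    intro k
    have hk := hrec k
    constructor
    · rintro ⟨h₀, h₁⟩
      rw [h₀, h₁] at hk
      exact ⟨h₁, by simpa using hk⟩
    · rintro ⟨h₁, h₂⟩
      rw [h₁, h₂] at hk
      exact ⟨by simpa using hk, h₁⟩
  have hpair : ∀ k, (g k = 0 ∧ g (k + 1) = 0) ↔ (g 0 = 0 ∧ g 1 = 0) := by
    intro k
    induction k with
    | zero => rfl
    | succ k ih => rw [← step, ih]
  funext k
  exact ((hpair k).2 ((hpair m).1 ⟨hm, hm₁⟩)).1

/-- For real `x` the form `‖a‖² + ‖b‖² - x Re (conj a * b)` is conserved along solutions of the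
free equation; at `(g 0, g 1)` it equals `‖g 1‖²`, and at infinity it tends to `0`. -/
theorem IsSchrodingerSolution.apply_one_eq_zero_of_tendsto {x : ℝ}
    (hrec : IsSchrodingerSolution 0 x g) (hg0 : g 0 = 0) (hlim : Tendsto g atTop (𝓝 0)) :
    g 1 = 0 := by
  let F : ℂ × ℂ → ℝ := fun p => ‖p.1‖ ^ 2 + ‖p.2‖ ^ 2 - x * (conj p.1 * p.2).re
  have hF : ∀ k, F (g (k + 1), g (k + 2)) = F (g k, g (k + 1)) := by
    intro k
    have hk : g (k + 2) = x * g (k + 1) - g k := by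
      linear_combination (by simpa using hrec k : g k + g (k + 2) = x * g (k + 1))
    simp only [F, hk, Complex.sq_norm, Complex.normSq_apply, Complex.mul_re, Complex.mul_im,
      Complex.sub_re, Complex.sub_im, Complex.ofReal_re, Complex.ofReal_im, Complex.conj_re,
      Complex.conj_im]
    ring
  have hconst : ∀ k, F (g k, g (k + 1)) = ‖g 1‖ ^ 2 := by
    intro k
    induction k with
    | zero => simp [F, hg0]
    | succ k ih => rw [hF, ih]
  have hlimF : Tendsto (fun k => F (g k, g (k + 1))) atTop (𝓝 (F (0, 0))) :=
    ((by fun_prop : Continuous F).tendsto _).comp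
      (hlim.prodMk_nhds (hlim.comp (tendsto_add_atTop_nat 1)))
  simp only [hconst, tendsto_const_nhds_iff] at hlimF
  simpa [F] using hlimF

variable {v : ℕ → ℝ}

theorem IsSchrodingerSolution.energy_identity (hrec : IsSchrodingerSolution (fun k => v k * I) l g)
    (hg0 : g 0 = 0) (hg : Summable fun k => ‖g k‖ ^ 2) :
    2 * (∑' k, conj (g k) * g (k + 1)).re = l.re * ∑' k, ‖g k‖ ^ 2 ∧
      HasSum (fun k => v k * ‖g k‖ ^ 2) (l.im * ∑' k, ‖g k‖ ^ 2) := by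
  set S := ∑' k, conj (g k) * g (k + 1)
  set N := ∑' k, ‖g k‖ ^ 2
  have hS : HasSum (fun k => conj (g k) * g (k + 1)) S := (summable_conj_mul_succ hg).hasSum
  have hA : HasSum (fun k => conj (g (k + 1)) * g k) (conj S) := by
    simpa only [map_mul, Complex.conj_conj, mul_comm (g _)] using Complex.hasSum_conj'.mpr hS
  have hC : HasSum (fun k => conj (g (k + 1)) * g (k + 2)) S := by
    simpa [hg0] using (hasSum_nat_add_iff' 1).mpr hS
  have hN : HasSum (fun k => ((‖g (k + 1)‖ ^ 2 : ℝ) : ℂ)) N :=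
    Complex.hasSum_ofReal.mpr (hasSum_norm_sq_succ hg0 hg)
  have hB : HasSum (fun k => ((v (k + 1) * ‖g (k + 1)‖ ^ 2 : ℝ) : ℂ) * I)
      (l * N - conj S - S) := by
    refine (((hN.mul_left l).sub hA).sub hC).congr_fun fun k => ?_
    push_cast
    rw [← Complex.conj_mul']
    linear_combination conj (g (k + 1)) * hrec k
  obtain ⟨hBre, hBim⟩ := (Complex.hasSum_iff _ _).mp hB
  simp only [Complex.mul_re, Complex.mul_im, Complex.ofReal_re, Complex.ofReal_im,
    Complex.I_re, Complex.I_im, Complex.sub_re, Complex.sub_im, Complex.conj_re,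
    Complex.conj_im] at hBre hBim
  refine ⟨?_, ?_⟩
  · have := hasSum_zero.unique (by simpa using hBre)
    linarith
  · simpa [hg0] using (hasSum_nat_add_iff' 1).mp (by simpa [hg0] using hBim)

theorem IsSchrodingerSolution.abs_re_lt_two (hrec : IsSchrodingerSolution (fun k => v k * I) l g)
    (hg0 : g 0 = 0) (hg1 : g 1 ≠ 0) (hg : Summable fun k => ‖g k‖ ^ 2) :
    |l.re| < 2 := by
  have hN : 0 < ∑' k, ‖g k‖ ^ 2 := hg.tsum_pos (fun _ => by positivity) 1 (by simp [hg1])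
  have hS : ‖∑' k, conj (g k) * g (k + 1)‖ ≤ ∑' k, ‖g k‖ * ‖g (k + 1)‖ := by
    simpa using norm_tsum_le_tsum_norm (summable_conj_mul_succ hg).norm
  refine lt_of_mul_lt_mul_right ?_ hN.le
  calc |l.re| * ∑' k, ‖g k‖ ^ 2 = 2 * |(∑' k, conj (g k) * g (k + 1)).re| := by
        rw [← abs_of_pos hN, ← abs_mul, ← (hrec.energy_identity hg0 hg).1, abs_mul, abs_two]
    _ ≤ 2 * ∑' k, ‖g k‖ * ‖g (k + 1)‖ := by
        gcongr; exact (Complex.abs_re_le_norm _).trans hS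
    _ < 2 * ∑' k, ‖g k‖ ^ 2 := by
        gcongr; exact tsum_norm_mul_norm_succ_lt hg0 hg1 hg

end Recurrence

section StepPotential

def stepPotential (n : ℕ) (h : ℝ) (k : ℕ) : ℝ := if k ≤ n then h else 0

variable {n : ℕ} {h : ℝ} {l : ℂ} {g : ℕ → ℂ}

theorem IsSchrodingerSolution.im_pos_of_stepPotential
    (hrec : IsSchrodingerSolution (fun k => stepPotential n h k * I) l g) (hh : 0 < h)
    (hg0 : g 0 = 0) (hg1 : g 1 ≠ 0) (hg : Summable fun k => ‖g k‖ ^ 2) :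
    0 < l.im := by
  by_contra! him
  have hV := (hrec.energy_identity hg0 hg).2
  have hw : ∀ k, 0 ≤ stepPotential n h k := fun k => by
    unfold stepPotential; split_ifs <;> linarith
  have hN : 0 < ∑' k, ‖g k‖ ^ 2 := hg.tsum_pos (fun _ => by positivity) 1 (by simp [hg1])
  have hgn : g n = 0 := eq_zero_of_hasSum_mul_norm_sq_nonpos hw hV
    (mul_nonpos_of_nonpos_of_nonneg him hN.le) (by simp [stepPotential, hh])
  have hl : (l.re : ℂ) = l := by
    have := hV.nonneg fun k => mul_nonneg (hw k) (by positivity)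
    exact Complex.ext rfl (by rw [Complex.ofReal_im]; nlinarith)
  have hgn1 : g (n + 1) = 0 := by
    refine IsSchrodingerSolution.apply_one_eq_zero_of_tendsto (g := fun k => g (n + k))
      (x := l.re) (fun k => ?_) hgn ((tendsto_zero_of_summable_norm_sq hg).comp
        (tendsto_atTop_mono (fun k => Nat.le_add_left k n) tendsto_id))
    have hk := hrec (n + k)
    simp only [stepPotential, if_neg (by omega : ¬ n + k + 1 ≤ n), Complex.ofReal_zero,
      zero_mul, add_zero] at hk
    simpa only [hl, ← add_assoc, Pi.zero_apply, zero_mul, add_zero] using hk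
  exact hg1 (congrFun (hrec.eq_zero_of_consecutive_zeros hgn hgn1) 1)

theorem IsSchrodingerSolution.im_lt_of_stepPotential
    (hrec : IsSchrodingerSolution (fun k => stepPotential n h k * I) l g) (hh : 0 < h)
    (hg0 : g 0 = 0) (hg1 : g 1 ≠ 0) (hg : Summable fun k => ‖g k‖ ^ 2) :
    l.im < h := by
  by_contra! him
  have hV := (hrec.energy_identity hg0 hg).2
  have hrest : HasSum (fun k => (h - stepPotential n h k) * ‖g k‖ ^ 2)
      (h * ∑' k, ‖g k‖ ^ 2 - l.im * ∑' k, ‖g k‖ ^ 2) :=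
    ((hg.hasSum.mul_left h).sub hV).congr_fun fun k => by ring
  have hw : ∀ k, 0 ≤ h - stepPotential n h k := fun k => by
    unfold stepPotential; split_ifs <;> linarith
  have hN : 0 ≤ ∑' k, ‖g k‖ ^ 2 := tsum_nonneg fun _ => by positivity
  have htail : ∀ k, n < k → g k = 0 := fun k hk =>
    eq_zero_of_hasSum_mul_norm_sq_nonpos hw hrest
      (sub_nonpos.mpr (mul_le_mul_of_nonneg_right him hN))
      (by simp [stepPotential, not_le.mpr hk, hh])
  exact hg1 (congrFun (hrec.eq_zero_of_consecutive_zeros (htail (n + 1) (by omega))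
    (htail (n + 2) (by omega))) 1)

end StepPotential

/-- Localization of the discrete spectrum of `J_{n,h}` (Proposition 3.1):
every eigenvalue lies in the open rectangle `|Re λ| < 2`, `0 < Im λ < h`. -/
theorem stmt14 (n : ℕ) (h : ℝ) (hh : 0 < h) (l : ℂ)
    (hl : IsSchrodingerEigenvalue n h l) :
    |l.re| < 2 ∧ 0 < l.im ∧ l.im < h := by
  obtain ⟨g, hg0, hg, hsum, heq⟩ := hl
  have hrec : IsSchrodingerSolution (fun k => stepPotential n h k * I) l g := fun k => by
    simpa [stepPotential, apply_ite] using heq (k + 1) (by omega)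
  have hg1 : g 1 ≠ 0 := fun h1 => hg (hrec.eq_zero_of_consecutive_zeros hg0 h1)
  exact ⟨hrec.abs_re_lt_two hg0 hg1 hsum, hrec.im_pos_of_stepPotential hh hg0 hg1 hsum,
    hrec.im_lt_of_stepPotential hh hg0 hg1 hsum⟩
end
end
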